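/- For all positive integers s, k and n, the series ∑_{q=1}^∞ μ(q) c_q^s(n^s) / J_{s+k}(q) converges and equals ∏_{p | n, p prime} (1 - (p^s - 1)/(p^{s+k} - 1)) · ∏_{p ∤ n, p prime} (1 + 1/(p^{s+k} - 1)), where the second product is taken over all primes not dividing n (and converges). -/

import Mathlib

open Finset Filter

/-- The generalized GCD `(m, n)_s`: the largest positive integer of the form `l ^ s`
dividing both `m` and `n`. -/
noncomputable def genGcd (s m n : ℕ) : ℕ :=
  letI := Classical.dec
  ((Nat.gcd m n).divisors.filter fun d => ∃ l : ℕ, l ^ s = d).sup id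

/-- The Cohen–Ramanujan sum `c_r^s(n) = ∑_{h=1, (h, r^s)_s = 1}^{r^s} e^{2πinh/r^s}`. -/
noncomputable def cohenRamanujanSum (s r n : ℕ) : ℂ :=
  ∑ h ∈ Finset.Icc 1 (r ^ s),
    if genGcd s h (r ^ s) = 1 then
      Complex.exp (2 * Real.pi * Complex.I * n * h / (r ^ s)) else 0

/-- The Jordan totient function `J_a(n) = n^a ∏_{p ∣ n, p prime} (1 - 1/p^a)`,
with arbitrary real exponent `a`. -/
noncomputable def jordanTotient (a : ℝ) (n : ℕ) : ℝ :=
  (n : ℝ) ^ a * ∏ p ∈ n.primeFactors, (1 - 1 / (p : ℝ) ^ a)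

/-- `tauPow k n` is the number of positive integers of the form `l ^ k` dividing `n`. -/
noncomputable def tauPow (k n : ℕ) : ℕ :=
  letI := Classical.dec
  (n.divisors.filter fun d => ∃ l : ℕ, l ^ k = d).card

/-- The Riemann zeta function of a real argument `s > 1`, as `∑_{n ≥ 1} 1/n^s`. -/
noncomputable def realZeta (s : ℝ) : ℝ := ∑' n : ℕ, 1 / (n : ℝ) ^ s

/-!
For squarefree `q`, inclusion–exclusion over the prime factors of `q` and the orthogonality of
the additive characters `h ↦ e^{2πiNh/q^s}` give `c_q^s(n^s) = ∏_{p ∣ q} (p^s [p ∣ n] - 1)`, while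
`J_{s+k}(q) = ∏_{p ∣ q} (p^{s+k} - 1)`. So the `q`-th term is `μ(q) ∏_{p ∣ q} g(p)` with
`g(p) = (p^s [p ∣ n] - 1) / (p^{s+k} - 1)`, a multiplicative function supported on squarefree
numbers. As `∑_p |g(p)| < ∞`, the series converges absolutely and equals the Euler product
`∏_p (1 - g(p))`. The factors with `p ∤ n` are `1 + 1/(p^{s+k} - 1)`; their product converges,
being the Euler product of the same series with `g` set to `0` on the primes dividing `n`.
-/

open ArithmeticFunction
open scoped ArithmeticFunction.Moebius


theorem genGcd_eq_one_iff {s m n : ℕ} (hs : s ≠ 0) (hmn : Nat.gcd m n ≠ 0) :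
    genGcd s m n = 1 ↔ ∀ p, p.Prime → ¬ p ^ s ∣ Nat.gcd m n := by
  classical
  have hone : 1 ∈ (Nat.gcd m n).divisors.filter fun d => ∃ l : ℕ, l ^ s = d := by
    simpa using hmn
  rw [genGcd, Finset.filter_congr_decidable, le_antisymm_iff,
    and_iff_left (Finset.le_sup_of_le (f := id) hone le_rfl : 1 ≤ _), Finset.sup_le_iff]
  simp only [Finset.mem_filter, Nat.mem_divisors, id_eq]
  constructor
  · intro h p hp hdvd
    have := h _ ⟨⟨hdvd, hmn⟩, p, rfl⟩
    exact (Nat.one_lt_pow hs hp.one_lt).not_ge this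
  · rintro h _ ⟨⟨hdvd, -⟩, l, rfl⟩
    by_contra hlt
    have hl : l ≠ 1 := by rintro rfl; simp at hlt
    obtain ⟨p, hp, hpl⟩ := Nat.exists_prime_and_dvd hl
    exact h p hp ((pow_dvd_pow_of_dvd hpl s).trans hdvd)

theorem genGcd_pow_eq_one_iff {s h q : ℕ} (hs : s ≠ 0) (hh : h ≠ 0) (hq : q ≠ 0) :
    genGcd s h (q ^ s) = 1 ↔ ∀ p ∈ q.primeFactors, ¬ p ^ s ∣ h := by
  rw [genGcd_eq_one_iff hs (Nat.gcd_ne_zero_left hh)]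
  simp only [Nat.dvd_gcd_iff, Nat.pow_dvd_pow_iff hs, Nat.mem_primeFactors, ne_eq, hq,
    not_false_eq_true, and_true, not_and]
  exact ⟨fun h p hp hd => h p hp.1 hd hp.2, fun h p hp hd hq => h p ⟨hp, hq⟩ hd⟩

theorem prod_pow_dvd_iff {t : Finset ℕ} (ht : ∀ p ∈ t, p.Prime) {s h : ℕ} :
    (∏ p ∈ t, p) ^ s ∣ h ↔ ∀ p ∈ t, p ^ s ∣ h := by
  rw [← Finset.prod_pow]
  refine ⟨fun hd p hp => (Finset.dvd_prod_of_mem _ hp).trans hd, fun hall => ?_⟩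
  rw [← Int.natCast_dvd_natCast]
  push_cast
  refine Finset.prod_dvd_of_coprime (fun p hp p' hp' hne => ?_)
    fun p hp => Int.natCast_dvd_natCast.mpr (hall p hp)
  exact Nat.isCoprime_iff_coprime.mpr
    (((Nat.coprime_primes (ht p hp) (ht p' hp')).mpr hne).pow s s)

theorem sum_Icc_exp_eq_ite_dvd (M N : ℕ) (hM : M ≠ 0) :
    ∑ h ∈ Finset.Icc 1 M, Complex.exp (2 * Real.pi * Complex.I * N * h / M)
      = if M ∣ N then (M : ℂ) else 0 := by
  set ζ := Complex.exp (2 * Real.pi * Complex.I * N / M)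
  have hM' : (M : ℂ) ≠ 0 := Nat.cast_ne_zero.mpr hM
  have hpow : ∀ h : ℕ, Complex.exp (2 * Real.pi * Complex.I * N * h / M) = ζ ^ h := by
    intro h
    rw [← Complex.exp_nat_mul]
    ring_nf
  have hζ : ζ = 1 ↔ M ∣ N := by
    rw [Complex.exp_eq_one_iff]
    constructor
    · rintro ⟨j, hj⟩
      field_simp at hj
      exact Int.natCast_dvd_natCast.mp ⟨j, by exact_mod_cast hj⟩
    · rintro ⟨c, rfl⟩
      exact ⟨c, by push_cast; field_simp⟩
  have hζM : ζ ^ M = 1 := by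
    rw [← hpow, mul_div_cancel_right₀ _ hM', mul_comm]
    exact Complex.exp_nat_mul_two_pi_mul_I N
  simp_rw [hpow]
  split_ifs with hdvd
  · simp [hζ.mpr hdvd]
  · rw [← Finset.Ico_add_one_right_eq_Icc, Finset.sum_Ico_eq_sum_range, add_tsub_cancel_right]
    simp_rw [pow_add, pow_one, ← Finset.mul_sum, geom_sum_eq (mt hζ.mp hdvd), hζM]
    simp

theorem sum_Icc_mul_ite_dvd {M : Type*} [AddCommMonoid M] (f : ℕ → M) {d : ℕ} (hd : d ≠ 0)
    (n : ℕ) :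
    ∑ h ∈ Finset.Icc 1 (d * n), (if d ∣ h then f h else 0)
      = ∑ j ∈ Finset.Icc 1 n, f (d * j) := by
  have hd' : 0 < d := Nat.pos_of_ne_zero hd
  have hmul : (Finset.Icc 1 (d * n)).filter (d ∣ ·) = (Finset.Icc 1 n).image (d * ·) := by
    ext h
    simp only [Finset.mem_filter, Finset.mem_Icc, Finset.mem_image]
    constructor
    · rintro ⟨⟨h1, h2⟩, j, rfl⟩
      exact ⟨j, ⟨Nat.pos_of_mul_pos_left h1, Nat.le_of_mul_le_mul_left h2 hd'⟩, rfl⟩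
    · rintro ⟨j, ⟨hj1, hj2⟩, rfl⟩
      exact ⟨⟨Nat.mul_pos hd' hj1, Nat.mul_le_mul_left d hj2⟩, dvd_mul_right d j⟩
  rw [← Finset.sum_filter, hmul,
    Finset.sum_image fun _ _ _ _ h => Nat.eq_of_mul_eq_mul_left hd' h]

theorem sum_Icc_ite_pow_dvd_exp {s q d : ℕ} (N : ℕ) (hq : q ≠ 0) (hd : d ∣ q) :
    ∑ h ∈ Finset.Icc 1 (q ^ s),
        (if d ^ s ∣ h then Complex.exp (2 * Real.pi * Complex.I * N * h / (q : ℂ) ^ s) else 0)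
      = if (q / d) ^ s ∣ N then (((q / d : ℕ) : ℂ)) ^ s else 0 := by
  obtain ⟨e, rfl⟩ := hd
  have hd0 : d ≠ 0 := left_ne_zero_of_mul hq
  have he0 : e ≠ 0 := right_ne_zero_of_mul hq
  rw [Nat.mul_div_cancel_left e (Nat.pos_of_ne_zero hd0), mul_pow,
    sum_Icc_mul_ite_dvd _ (pow_ne_zero s hd0)]
  have hcancel : ∀ j : ℕ,
      2 * Real.pi * Complex.I * N * ((d ^ s * j : ℕ) : ℂ) / ((d * e : ℕ) : ℂ) ^ s
        = 2 * Real.pi * Complex.I * N * j / ((e ^ s : ℕ) : ℂ) := by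
    intro j
    have : (d : ℂ) ≠ 0 := Nat.cast_ne_zero.mpr hd0
    have : (e : ℂ) ≠ 0 := Nat.cast_ne_zero.mpr he0
    push_cast
    field_simp
    ring
  simp_rw [hcancel, sum_Icc_exp_eq_ite_dvd _ N (pow_ne_zero s he0)]
  push_cast
  rfl

theorem ite_forall_not_pow_dvd_eq_sum_powerset {R : Type*} [CommRing R] {P : Finset ℕ}
    (hP : ∀ p ∈ P, p.Prime) (s h : ℕ) :
    (if ∀ p ∈ P, ¬ p ^ s ∣ h then (1 : R) else 0)
      = ∑ t ∈ P.powerset, (-1) ^ t.card * if (∏ p ∈ t, p) ^ s ∣ h then 1 else 0 := by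
  calc (if ∀ p ∈ P, ¬ p ^ s ∣ h then (1 : R) else 0)
      = ∏ p ∈ P, (if ¬ p ^ s ∣ h then (1 : R) else 0) := by
        rw [Finset.prod_ite_zero, Finset.prod_const_one]
    _ = ∏ p ∈ P, (1 + -(if p ^ s ∣ h then (1 : R) else 0)) :=
        Finset.prod_congr rfl fun p _ => by split_ifs <;> simp
    _ = ∑ t ∈ P.powerset, ∏ p ∈ t, -(if p ^ s ∣ h then (1 : R) else 0) :=
        Finset.prod_one_add _
    _ = _ := Finset.sum_congr rfl fun t ht => by
        simp only [Finset.prod_neg, Finset.prod_ite_zero, Finset.prod_const_one,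
          prod_pow_dvd_iff fun p hp => hP p (Finset.mem_powerset.mp ht hp)]

theorem cohenRamanujanSum_eq_sum_powerset {s q : ℕ} (N : ℕ) (hs : s ≠ 0) (hq : q ≠ 0) :
    cohenRamanujanSum s q N = ∑ t ∈ q.primeFactors.powerset, (-1 : ℂ) ^ t.card *
      if (q / ∏ p ∈ t, p) ^ s ∣ N then ((q / ∏ p ∈ t, p : ℕ) : ℂ) ^ s else 0 := by
  set E : ℕ → ℂ := fun h => Complex.exp (2 * Real.pi * Complex.I * N * h / (q : ℂ) ^ s)
  have hind : ∀ h ∈ Finset.Icc 1 (q ^ s), (if genGcd s h (q ^ s) = 1 then E h else 0)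
      = ∑ t ∈ q.primeFactors.powerset,
          (-1 : ℂ) ^ t.card * if (∏ p ∈ t, p) ^ s ∣ h then E h else 0 := by
    intro h hh
    have hh0 : h ≠ 0 := Nat.one_le_iff_ne_zero.mp (Finset.mem_Icc.mp hh).1
    simp only [genGcd_pow_eq_one_iff hs hh0 hq]
    simpa only [ite_zero_mul, one_mul, Finset.sum_mul, mul_assoc] using
      congrArg (· * E h) (ite_forall_not_pow_dvd_eq_sum_powerset (R := ℂ)
        (fun p hp => Nat.prime_of_mem_primeFactors hp) s h)
  rw [cohenRamanujanSum, Finset.sum_congr rfl hind, Finset.sum_comm]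
  refine Finset.sum_congr rfl fun t ht => ?_
  rw [← Finset.mul_sum]
  congr 1
  exact sum_Icc_ite_pow_dvd_exp N hq
    ((Finset.prod_dvd_prod_of_subset _ _ (fun p => p) (Finset.mem_powerset.mp ht)).trans
      (Nat.prod_primeFactors_dvd q))

theorem cohenRamanujanSum_pow_of_squarefree {s q : ℕ} (n : ℕ) (hs : s ≠ 0)
    (hq : Squarefree q) :
    cohenRamanujanSum s q (n ^ s)
      = ∏ p ∈ q.primeFactors, (if p ∣ n then (p : ℂ) ^ s - 1 else -1) := by
  have hP : ∀ p ∈ q.primeFactors, p.Prime := fun p hp => Nat.prime_of_mem_primeFactors hp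
  have hsplit : ∀ p ∈ q.primeFactors, (if p ∣ n then (p : ℂ) ^ s - 1 else -1)
      = (if p ∣ n then (p : ℂ) ^ s else 0) - 1 := fun p _ => by split_ifs <;> simp
  rw [cohenRamanujanSum_eq_sum_powerset _ hs hq.ne_zero, Finset.prod_congr rfl hsplit,
    Finset.prod_sub]
  refine Finset.sum_congr rfl fun t ht => ?_
  have hsub := Finset.mem_powerset.mp ht
  have hquot : q / ∏ p ∈ t, p = ∏ p ∈ q.primeFactors \ t, p := by
    conv_lhs => rw [← Nat.prod_primeFactors_of_squarefree hq, ← Finset.prod_sdiff hsub]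
    exact Nat.mul_div_cancel _ (Finset.prod_pos fun p hp => (hP p (hsub hp)).pos)
  have hdvd : (∏ p ∈ q.primeFactors \ t, p) ∣ n ↔ ∀ p ∈ q.primeFactors \ t, p ∣ n := by
    simpa using prod_pow_dvd_iff (s := 1) (h := n)
      fun p hp => hP p (Finset.mem_sdiff.mp hp).1
  simp only [hquot, Nat.pow_dvd_pow_iff hs, Finset.prod_const_one, mul_one,
    Finset.prod_ite_zero, ← hdvd, Nat.cast_prod, Finset.prod_pow]

noncomputable def moebiusProd {R : Type*} [CommRing R] (g : ℕ → R) (q : ℕ) : R :=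
  μ q * ∏ p ∈ q.primeFactors, g p

section moebiusProd

variable {R : Type*} [CommRing R] (g : ℕ → R)

theorem moebiusProd_zero : moebiusProd g 0 = 0 := by
  simp [moebiusProd]

theorem moebiusProd_one : moebiusProd g 1 = 1 := by
  simp [moebiusProd]

theorem moebiusProd_mul {a b : ℕ} (hab : a.Coprime b) :
    moebiusProd g (a * b) = moebiusProd g a * moebiusProd g b := by
  rw [moebiusProd, moebiusProd, moebiusProd, isMultiplicative_moebius.map_mul_of_coprime hab,
    hab.primeFactors_mul, Finset.prod_union hab.disjoint_primeFactors]
  push_cast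
  ring

theorem moebiusProd_prime {p : ℕ} (hp : p.Prime) : moebiusProd g p = -g p := by
  simp [moebiusProd, moebius_apply_prime hp, hp.primeFactors]

theorem moebiusProd_prime_pow {p e : ℕ} (hp : p.Prime) (he : 2 ≤ e) :
    moebiusProd g (p ^ e) = 0 := by
  rw [moebiusProd, moebius_apply_prime_pow hp (by omega), if_neg (by omega)]
  simp

end moebiusProd

section EulerProduct

variable {𝕜 : Type*} [NormedField 𝕜] {g : ℕ → 𝕜}

theorem norm_moebiusProd_le (q : ℕ) :
    ‖moebiusProd g q‖ ≤ if Squarefree q then ∏ p ∈ q.primeFactors, ‖g p‖ else 0 := by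
  split_ifs with hq
  · rw [moebiusProd, moebius_apply_of_squarefree hq, norm_mul, norm_prod]
    push_cast
    simp
  · simp [moebiusProd, moebius_eq_zero_of_not_squarefree hq]

theorem sum_range_norm_moebiusProd_le (N : ℕ) :
    ∑ q ∈ Finset.range N, ‖moebiusProd g q‖
      ≤ ∑ t ∈ N.primesBelow.powerset, ∏ p ∈ t, ‖g p‖ := by
  have hinj : Set.InjOn Nat.primeFactors {q | Squarefree q} := fun q hq q' hq' h => by
    rw [← Nat.prod_primeFactors_of_squarefree hq, ← Nat.prod_primeFactors_of_squarefree hq', h]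
  calc ∑ q ∈ Finset.range N, ‖moebiusProd g q‖
      ≤ ∑ q ∈ range N, if Squarefree q then ∏ p ∈ q.primeFactors, ‖g p‖ else 0 :=
        Finset.sum_le_sum fun q _ => norm_moebiusProd_le q
    _ = ∑ t ∈ ((range N).filter Squarefree).image Nat.primeFactors, ∏ p ∈ t, ‖g p‖ := by
        rw [← Finset.sum_filter, Finset.sum_image (s := (Finset.range N).filter Squarefree)
          fun q hq q' hq' =>
          hinj (Finset.mem_filter.mp hq).2 (Finset.mem_filter.mp hq').2]
    _ ≤ ∑ t ∈ N.primesBelow.powerset, ∏ p ∈ t, ‖g p‖ := by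
        refine Finset.sum_le_sum_of_subset_of_nonneg ?_
          fun t _ _ => Finset.prod_nonneg fun p _ => norm_nonneg _
        intro t ht
        obtain ⟨q, hq, rfl⟩ := Finset.mem_image.mp ht
        refine Finset.mem_powerset.mpr fun p hp => Nat.mem_primesBelow.mpr
          ⟨(Nat.le_of_mem_primeFactors hp).trans_lt ?_, Nat.prime_of_mem_primeFactors hp⟩
        exact Finset.mem_range.mp (Finset.mem_filter.mp hq).1

theorem summable_norm_moebiusProd (hg : Summable fun p : Nat.Primes => ‖g p‖) :
    Summable fun q => ‖moebiusProd g q‖ := by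
  set G : ℕ → ℝ := {p | p.Prime}.indicator fun p => ‖g p‖
  have hG : Summable G := summable_subtype_iff_indicator.mp hg
  refine summable_of_sum_range_le (c := Real.exp (∑' p, G p)) (fun _ => norm_nonneg _)
    fun N => (sum_range_norm_moebiusProd_le N).trans ?_
  calc ∑ t ∈ N.primesBelow.powerset, ∏ p ∈ t, ‖g p‖
      = ∏ p ∈ N.primesBelow, (1 + ‖g p‖) := (Finset.prod_one_add _).symm
    _ ≤ ∏ p ∈ N.primesBelow, Real.exp ‖g p‖ :=
        Finset.prod_le_prod (fun p _ => by positivity)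
          fun p _ => by linarith [Real.add_one_le_exp ‖g p‖]
    _ = Real.exp (∑ p ∈ Finset.range N, G p) := by
        simp only [← Real.exp_sum, Nat.primesBelow, Finset.sum_filter, G, Set.indicator_apply,
          Set.mem_ofPred_eq]
    _ ≤ Real.exp (∑' p, G p) :=
        Real.exp_le_exp.mpr (hG.sum_le_tsum _ fun p _ => Set.indicator_nonneg
          (fun p _ => norm_nonneg _) p)

theorem hasProd_one_sub_moebiusProd [CompleteSpace 𝕜]
    (hg : Summable fun p : Nat.Primes => ‖g p‖) :
    HasProd ({p | p.Prime}.mulIndicator fun p => 1 - g p) (∑' q, moebiusProd g q) := by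
  have hEuler := EulerProduct.eulerProduct_hasProd_mulIndicator (moebiusProd_one g)
    (moebiusProd_mul g) (summable_norm_moebiusProd hg) (moebiusProd_zero g)
  convert hEuler using 1
  refine Set.mulIndicator_congr fun p hp => ?_
  rw [tsum_eq_sum (s := Finset.range 2) fun e he =>
    moebiusProd_prime_pow g hp (not_lt.mp (mt Finset.mem_range.mpr he))]
  simp [Finset.sum_range_succ, moebiusProd_one, moebiusProd_prime g hp, sub_eq_add_neg]

theorem hasProd_one_sub_moebiusProd_not_dvd [CompleteSpace 𝕜]
    (hg : Summable fun p : Nat.Primes => ‖g p‖) (n : ℕ) :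
    HasProd ({p | p.Prime ∧ ¬ p ∣ n}.mulIndicator fun p => 1 - g p)
      (∑' q, moebiusProd (fun p => if p ∣ n then 0 else g p) q) := by
  have hg' : Summable fun p : Nat.Primes => ‖if (p : ℕ) ∣ n then 0 else g p‖ :=
    hg.of_nonneg_of_le (fun _ => norm_nonneg _) fun p => by
      split_ifs <;> simp
  rw [show {p | p.Prime ∧ ¬ p ∣ n}.mulIndicator (fun p => 1 - g p)
      = {p | p.Prime}.mulIndicator fun p => 1 - if p ∣ n then 0 else g p from funext fun p => by
    by_cases hp : p.Prime <;> by_cases hpn : p ∣ n <;> simp [hp, hpn]]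
  exact hasProd_one_sub_moebiusProd hg'

end EulerProduct

theorem jordanTotient_of_squarefree (a : ℝ) {q : ℕ} (hq : Squarefree q) :
    jordanTotient a q = ∏ p ∈ q.primeFactors, ((p : ℝ) ^ a - 1) := by
  have hpos : ∀ p ∈ q.primeFactors, (0 : ℝ) < p := fun p hp =>
    Nat.cast_pos.mpr (Nat.prime_of_mem_primeFactors hp).pos
  rw [jordanTotient, ← Nat.prod_primeFactors_of_squarefree hq, Nat.primeFactors_prod
    fun p hp => Nat.prime_of_mem_primeFactors hp, Nat.cast_prod,
    ← Real.finsetProd_rpow _ _ fun p hp => (hpos p hp).le, ← Finset.prod_mul_distrib]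
  refine Finset.prod_congr rfl fun p hp => ?_
  have : (p : ℝ) ^ a ≠ 0 := (Real.rpow_pos_of_pos (hpos p hp) a).ne'
  field_simp

theorem moebius_mul_cohenRamanujanSum_div_jordanTotient {s : ℕ} (m n q : ℕ) (hs : s ≠ 0) :
    (μ q : ℂ) * cohenRamanujanSum s q (n ^ s) / (jordanTotient m q : ℂ)
      = ((moebiusProd (fun p => (if p ∣ n then (p : ℝ) ^ s - 1 else -1) / ((p : ℝ) ^ m - 1)) q
          : ℝ) : ℂ) := by
  by_cases hq : Squarefree q
  · rw [cohenRamanujanSum_pow_of_squarefree n hs hq, jordanTotient_of_squarefree _ hq,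
      moebiusProd, Finset.prod_div_distrib]
    push_cast
    simp only [apply_ite (fun x : ℝ => (x : ℂ)), Real.rpow_natCast]
    push_cast
    ring
  · simp [moebiusProd, moebius_eq_zero_of_not_squarefree hq]

theorem summable_norm_div_prime_pow_sub_one {m : ℕ} (hm : 2 ≤ m) {w : ℕ → ℝ} {C : ℝ}
    (hw : ∀ p, p.Prime → |w p| ≤ C) :
    Summable fun p : Nat.Primes => ‖w p / ((p : ℝ) ^ m - 1)‖ := by
  have hsum : Summable fun p : Nat.Primes => 2 * C * (1 / (p : ℝ) ^ 2) :=
    ((Real.summable_one_div_nat_pow.mpr one_lt_two).comp_injective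
      Subtype.val_injective).mul_left (2 * C)
  refine hsum.of_nonneg_of_le (fun _ => norm_nonneg _) fun p => ?_
  have hp : (2 : ℝ) ≤ p := by exact_mod_cast p.2.two_le
  have hpm : (p : ℝ) ^ 2 ≤ (p : ℝ) ^ m := pow_le_pow_right₀ (by linarith) hm
  have hden : (p : ℝ) ^ 2 / 2 ≤ (p : ℝ) ^ m - 1 := by nlinarith
  rw [Real.norm_eq_abs, abs_div, abs_of_pos (a := (p : ℝ) ^ m - 1) (by nlinarith)]
  calc |w p| / ((p : ℝ) ^ m - 1) ≤ C / ((p : ℝ) ^ 2 / 2) :=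
        div_le_div₀ ((abs_nonneg _).trans (hw p p.2)) (hw p p.2) (by positivity) hden
    _ = 2 * C * (1 / (p : ℝ) ^ 2) := by field_simp

theorem abs_ite_dvd_pow_sub_one_le {n : ℕ} (hn : n ≠ 0) (s p : ℕ) :
    |(if p ∣ n then (p : ℝ) ^ s - 1 else -1)| ≤ (n : ℝ) ^ s := by
  have hn' : 0 < n := Nat.pos_of_ne_zero hn
  have hn1 : (1 : ℝ) ≤ n := by exact_mod_cast hn'
  split_ifs with hpn
  · have hpn' : (p : ℝ) ≤ n := by exact_mod_cast Nat.le_of_dvd hn' hpn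
    have hp1 : (1 : ℝ) ≤ p := by exact_mod_cast Nat.pos_of_dvd_of_pos hpn hn'
    rw [abs_of_nonneg (sub_nonneg.mpr (one_le_pow₀ hp1))]
    linarith [pow_le_pow_left₀ (by linarith) hpn' s]
  · simpa using one_le_pow₀ (n := s) hn1

theorem HasSum.tendsto_sum_Icc_one {α : Type*} [AddCommMonoid α] [TopologicalSpace α]
    {f : ℕ → α} {a : α} (hf : HasSum f a) (h0 : f 0 = 0) :
    Tendsto (fun N => ∑ q ∈ Finset.Icc 1 N, f q) atTop (nhds a) := by
  refine (hf.tendsto_sum_nat.comp (tendsto_add_atTop_nat 1)).congr fun N => ?_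
  rw [Function.comp_apply, Finset.range_eq_Ico, Finset.sum_eq_sum_Ico_succ_bot N.succ_pos, h0,
    _root_.zero_add, Nat.succ_eq_add_one, Finset.Ico_add_one_right_eq_Icc]

theorem HasProd.eq_prod_primeFactors_mul {α : Type*} [CommMonoid α] [TopologicalSpace α]
    [T2Space α] [ContinuousMul α] {f : ℕ → α} {n : ℕ} (hn : n ≠ 0) {a b : α}
    (ha : HasProd ({p | p.Prime}.mulIndicator f) a)
    (hb : HasProd ({p | p.Prime ∧ ¬ p ∣ n}.mulIndicator f) b) :
    a = (∏ p ∈ n.primeFactors, f p) * b := by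
  have hdisj : Disjoint (n.primeFactors : Set ℕ) {p | p.Prime ∧ ¬ p ∣ n} :=
    Set.disjoint_left.mpr fun p hp hp' => hp'.2 (Nat.dvd_of_mem_primeFactors hp)
  have hunion : (n.primeFactors : Set ℕ) ∪ {p | p.Prime ∧ ¬ p ∣ n} = {p | p.Prime} := by
    ext p
    simp only [Set.mem_union, Finset.mem_coe, Nat.mem_primeFactors, Set.mem_ofPred_eq]
    tauto
  refine ha.unique ?_
  rw [← hunion, Set.mulIndicator_union_of_disjoint hdisj]
  exact (hasProd_subtype_iff_mulIndicator.mp (n.primeFactors.hasProd f)).mul hb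

/-- For all positive integers `s, k, n`, the series
`∑_{q ≥ 1} μ(q) c_q^s(n^s) / J_{s+k}(q)` converges and equals
`∏_{p ∣ n} (1 - (p^s - 1)/(p^{s+k} - 1)) · ∏_{p ∤ n} (1 + 1/(p^{s+k} - 1))`,
where the second (infinite) product, taken over all primes not dividing `n`,
converges. -/
theorem cohenRamanujan_series_jordan_prod (s k n : ℕ) (hs : 0 < s) (hk : 0 < k)
    (hn : 0 < n) :
    ∃ P : ℝ,
      HasProd (fun p : {p : ℕ // p.Prime ∧ ¬ p ∣ n} =>
        1 + 1 / ((p.1 : ℝ) ^ (s + k) - 1)) P ∧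
      Filter.Tendsto
        (fun N : ℕ => ∑ q ∈ Finset.Icc 1 N,
          (ArithmeticFunction.moebius q : ℂ) * cohenRamanujanSum s q (n ^ s) /
            ((jordanTotient ((s : ℝ) + (k : ℝ)) q : ℝ) : ℂ))
        Filter.atTop
        (nhds ((((∏ p ∈ n.primeFactors,
          (1 - ((p : ℝ) ^ s - 1) / ((p : ℝ) ^ (s + k) - 1))) * P : ℝ)) : ℂ)) := by
  set w : ℕ → ℝ := fun p => if p ∣ n then (p : ℝ) ^ s - 1 else -1
  set g : ℕ → ℝ := fun p => w p / ((p : ℝ) ^ (s + k) - 1)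
  have hg : Summable fun p : Nat.Primes => ‖g p‖ := summable_norm_div_prime_pow_sub_one
    (by omega) fun p _ => abs_ite_dvd_pow_sub_one_le hn.ne' s p
  have hP := hasProd_one_sub_moebiusProd_not_dvd hg n
  have hterm : ∀ q : ℕ, (μ q : ℂ) * cohenRamanujanSum s q (n ^ s) /
      ((jordanTotient ((s : ℝ) + (k : ℝ)) q : ℝ) : ℂ) = (moebiusProd g q : ℝ) := by
    intro q
    rw [← Nat.cast_add, moebius_mul_cohenRamanujanSum_div_jordanTotient _ _ _ hs.ne']
  refine ⟨∑' q, moebiusProd (fun p => if p ∣ n then 0 else g p) q, ?_, ?_⟩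
  · refine (hasProd_subtype_iff_mulIndicator (s := {p : ℕ | p.Prime ∧ ¬ p ∣ n})
      (f := fun p : ℕ => 1 + 1 / ((p : ℝ) ^ (s + k) - 1))).mpr ?_
    rw [Set.mulIndicator_congr (g := fun p => 1 - g p) fun p hp => by
      simp [g, w, hp.2, sub_eq_add_neg, neg_div]]
    exact hP
  · have hQ : ∏ p ∈ n.primeFactors, (1 - g p)
        = ∏ p ∈ n.primeFactors, (1 - ((p : ℝ) ^ s - 1) / ((p : ℝ) ^ (s + k) - 1)) :=
      Finset.prod_congr rfl fun p hp => by simp [g, w, Nat.dvd_of_mem_primeFactors hp]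
    rw [← hQ, ← (hasProd_one_sub_moebiusProd hg).eq_prod_primeFactors_mul hn.ne' hP]
    simp_rw [hterm]
    exact (Complex.hasSum_ofReal.mpr (summable_norm_moebiusProd hg).of_norm.hasSum
      ).tendsto_sum_Icc_one (by simp [moebiusProd_zero])
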